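/- Consider signed distributions μ : ({−1,1})⁴ → ℝ on outcomes (a, b, a′, b′) with Σ μ = 1 whose four pairwise marginals onto the contexts (a,a′), (a,b′), (b,a′), (b,b′) equal the Bell-model tables: for (a,a′): equal outcomes have probability 1/2 each and unequal outcomes probability 0; for (a,b′) and for (b,a′): equal outcomes have probability 3/8 each and unequal outcomes 1/8 each; for (b,b′): equal outcomes have probability 1/8 each and unequal outcomes 3/8 each. Then the minimum of Σ_{ω ∈ ({−1,1})⁴} |μ(ω)| over all such μ equals 5/4 (equivalently, the contextuality of this empirical model equals 1/4). -/

import Mathlib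

/-!
The weight `w = [a = a'] + [a = b'] + [b = a'] + [b ≠ b'] - 2` only takes the values `-1, 0, 1`:
the products `a a'`, `a b'`, `b a'`, `b b'` multiply to `1`, so the four conditions can neither
all hold nor all fail. Hence `∑ |μ| ≥ ∑ μ w`, and the marginals alone force
`∑ μ w = 2 · ½ + 6 · ⅜ - 2 = 5/4`. The bound is attained by a quasi-distribution whose only
negative weight is `-1/8`.
-/

abbrev PM : Type := ({-1, 1} : Finset ℤ)

namespace PM

def neg : PM := ⟨-1, by decide⟩

def pos : PM := ⟨1, by decide⟩

theorem neg_ne_pos : neg ≠ pos := by decide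

theorem sum_eq {M : Type*} [AddCommMonoid M] (f : PM → M) : ∑ x : PM, f x = f neg + f pos := by
  rw [show (Finset.univ : Finset PM) = {neg, pos} by decide,
    Finset.sum_insert (by decide), Finset.sum_singleton]

theorem forall_iff {P : PM → Prop} : (∀ x, P x) ↔ P neg ∧ P pos := by
  refine ⟨fun h => ⟨h neg, h pos⟩, fun ⟨hn, hp⟩ ⟨x, hx⟩ => ?_⟩
  fin_cases hx
  exacts [hn, hp]

end PM

def ReproducesBellModel (μ : PM → PM → PM → PM → ℝ) : Prop :=
  (∑ a : PM, ∑ b : PM, ∑ a' : PM, ∑ b' : PM, μ a b a' b' = 1) ∧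
  (∀ a a' : PM, ∑ b : PM, ∑ b' : PM, μ a b a' b'
      = if a = a' then 1/2 else 0) ∧
  (∀ a b' : PM, ∑ b : PM, ∑ a' : PM, μ a b a' b'
      = if a = b' then 3/8 else 1/8) ∧
  (∀ b a' : PM, ∑ a : PM, ∑ b' : PM, μ a b a' b'
      = if b = a' then 3/8 else 1/8) ∧
  (∀ b b' : PM, ∑ a : PM, ∑ a' : PM, μ a b a' b'
      = if b = b' then 1/8 else 3/8)

noncomputable def chshWeight (a b a' b' : PM) : ℝ :=
  (if a = a' then 1 else 0) + (if a = b' then 1 else 0) + (if b = a' then 1 else 0) +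
    (if b = b' then 0 else 1) - 2

theorem abs_chshWeight_le_one (a b a' b' : PM) : |chshWeight a b a' b'| ≤ 1 := by
  revert a b a' b'
  simp only [PM.forall_iff, chshWeight, PM.neg_ne_pos, PM.neg_ne_pos.symm]
  norm_num

theorem ReproducesBellModel.sum_mul_chshWeight {μ : PM → PM → PM → PM → ℝ}
    (hμ : ReproducesBellModel μ) :
    ∑ a : PM, ∑ b : PM, ∑ a' : PM, ∑ b' : PM, μ a b a' b' * chshWeight a b a' b' = 5/4 := by
  obtain ⟨htot, haa', hab', hba', hbb'⟩ := hμ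
  have e₁ := haa' .neg .neg
  have e₂ := haa' .pos .pos
  have e₃ := hab' .neg .neg
  have e₄ := hab' .pos .pos
  have e₅ := hba' .neg .neg
  have e₆ := hba' .pos .pos
  have e₇ := hbb' .neg .pos
  have e₈ := hbb' .pos .neg
  simp only [PM.sum_eq, chshWeight, PM.neg_ne_pos, PM.neg_ne_pos.symm, if_true, if_false]
    at htot e₁ e₂ e₃ e₄ e₅ e₆ e₇ e₈ ⊢
  linear_combination e₁ + e₂ + e₃ + e₄ + e₅ + e₆ + e₇ + e₈ - 2 * htot

theorem ReproducesBellModel.five_fourths_le_sum_abs {μ : PM → PM → PM → PM → ℝ}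
    (hμ : ReproducesBellModel μ) :
    5/4 ≤ ∑ a : PM, ∑ b : PM, ∑ a' : PM, ∑ b' : PM, |μ a b a' b'| := by
  rw [← hμ.sum_mul_chshWeight]
  refine Finset.sum_le_sum fun a _ => Finset.sum_le_sum fun b _ =>
    Finset.sum_le_sum fun a' _ => Finset.sum_le_sum fun b' _ => ?_
  calc μ a b a' b' * chshWeight a b a' b' ≤ |μ a b a' b'| * |chshWeight a b a' b'| := by
        rw [← abs_mul]; exact le_abs_self _
    _ ≤ |μ a b a' b'| := mul_le_of_le_one_right (abs_nonneg _) (abs_chshWeight_le_one ..)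

noncomputable def bellWitness (a b a' b' : PM) : ℝ :=
  if a.1 = -1 ∧ b.1 = -1 ∧ a'.1 = -1 ∧ b'.1 = -1 then 1/4 else
  if a.1 = -1 ∧ b.1 = -1 ∧ a'.1 = -1 ∧ b'.1 = 1 then 1/8 else
  if a.1 = -1 ∧ b.1 = -1 ∧ a'.1 = 1 ∧ b'.1 = -1 then -(1/8) else
  if a.1 = -1 ∧ b.1 = 1 ∧ a'.1 = -1 ∧ b'.1 = -1 then 1/8 else
  if a.1 = -1 ∧ b.1 = 1 ∧ a'.1 = 1 ∧ b'.1 = -1 then 1/8 else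
  if a.1 = 1 ∧ b.1 = -1 ∧ a'.1 = 1 ∧ b'.1 = 1 then 1/4 else
  if a.1 = 1 ∧ b.1 = 1 ∧ a'.1 = 1 ∧ b'.1 = -1 then 1/8 else
  if a.1 = 1 ∧ b.1 = 1 ∧ a'.1 = 1 ∧ b'.1 = 1 then 1/8 else
  0

theorem reproducesBellModel_bellWitness : ReproducesBellModel bellWitness := by
  simp only [ReproducesBellModel, PM.forall_iff, PM.sum_eq]
  norm_num [bellWitness, PM.neg, PM.pos]

theorem sum_abs_bellWitness :
    ∑ a : PM, ∑ b : PM, ∑ a' : PM, ∑ b' : PM, |bellWitness a b a' b'| = 5/4 := by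
  simp only [PM.sum_eq]
  norm_num [bellWitness, PM.neg, PM.pos, abs_of_pos]

/-- For the Bell empirical model (contexts `(a,a')`, `(a,b')`, `(b,a')`, `(b,b')` with the
tables: `(a,a')`: equal outcomes `1/2`, unequal `0`; `(a,b')`, `(b,a')`: equal `3/8`,
unequal `1/8`; `(b,b')`: equal `1/8`, unequal `3/8`), the minimum of `∑ |μ(ω)|` over all
signed distributions `μ` on `({-1,1})⁴` with `∑ μ = 1` reproducing these pairwise
marginals equals `5/4`, i.e. the contextuality of the model is `1/4`. -/
theorem stmt_9 :
    IsLeast {s : ℝ | ∃ μ : PM → PM → PM → PM → ℝ,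
        (∑ a : PM, ∑ b : PM, ∑ a' : PM, ∑ b' : PM, μ a b a' b' = 1) ∧
        (∀ a a' : PM, ∑ b : PM, ∑ b' : PM, μ a b a' b'
            = if a = a' then 1/2 else 0) ∧
        (∀ a b' : PM, ∑ b : PM, ∑ a' : PM, μ a b a' b'
            = if a = b' then 3/8 else 1/8) ∧
        (∀ b a' : PM, ∑ a : PM, ∑ b' : PM, μ a b a' b'
            = if b = a' then 3/8 else 1/8) ∧
        (∀ b b' : PM, ∑ a : PM, ∑ a' : PM, μ a b a' b'
            = if b = b' then 1/8 else 3/8) ∧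
        s = ∑ a : PM, ∑ b : PM, ∑ a' : PM, ∑ b' : PM, |μ a b a' b'|}
      (5/4) := by
  obtain ⟨htot, haa', hab', hba', hbb'⟩ := reproducesBellModel_bellWitness
  refine ⟨⟨bellWitness, htot, haa', hab', hba', hbb', sum_abs_bellWitness.symm⟩, ?_⟩
  rintro s ⟨μ, htot, haa', hab', hba', hbb', rfl⟩
  exact ReproducesBellModel.five_fourths_le_sum_abs ⟨htot, haa', hab', hba', hbb'⟩
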